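/- (Markov) For every Boolean function f : {0,1}^n → {0,1}, the inversion complexity of f in circuits satisfies I(f) = ⌈log₂(d(f)+1)⌉; that is, the minimum number of NOT gates over all Boolean circuits computing f equals ⌈log₂(d(f)+1)⌉. -/

import Mathlib

namespace InversionComplexity

open Classical

/-- A chain is a strictly increasing sequence of Boolean vectors in `{0,1}^n`
(pointwise order on `Fin n → Bool`). -/
def IsChain {n : ℕ} (X : List (Fin n → Bool)) : Prop :=
  X.Chain' (· < ·)

/-- The decrease `d_X(f)` of `f` on a sequence `X`: the number of consecutive
indices `i` with `f (x^i) = 1` and `f (x^{i+1}) = 0`. -/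
def decOn {n : ℕ} (f : (Fin n → Bool) → Bool) : List (Fin n → Bool) → ℕ
  | a :: b :: t => (if f a = true ∧ f b = false then 1 else 0) + decOn f (b :: t)
  | _ => 0

/-- The decrease `d(f)` of `f`: the maximum of `d_X(f)` over all chains `X`. -/
noncomputable def dec {n : ℕ} (f : (Fin n → Bool) → Bool) : ℕ :=
  sSup { m | ∃ X : List (Fin n → Bool), IsChain X ∧ decOn f X = m }

/-- Boolean formulas: finite trees built from variable leaves, constant leaves,
binary AND/OR nodes and unary NOT nodes. -/
inductive Formula (n : ℕ) : Type
  | var : Fin n → Formula n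
  | const : Bool → Formula n
  | and : Formula n → Formula n → Formula n
  | or : Formula n → Formula n → Formula n
  | not : Formula n → Formula n

/-- Evaluation of a formula on an input. -/
def Formula.eval {n : ℕ} (x : Fin n → Bool) : Formula n → Bool
  | .var i => x i
  | .const b => b
  | .and C D => C.eval x && D.eval x
  | .or C D => C.eval x || D.eval x
  | .not C => !(C.eval x)

/-- `not(C)`: the number of NOT nodes of a formula. -/
def Formula.notCount {n : ℕ} : Formula n → ℕ
  | .var _ => 0
  | .const _ => 0
  | .and C D => C.notCount + D.notCount
  | .or C D => C.notCount + D.notCount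
  | .not C => C.notCount + 1

/-- `not_d(C, x)`: the number of NOT nodes of `C` in the *down* state on input `x`,
i.e. whose input subformula evaluates to `1`. -/
def Formula.notDown {n : ℕ} (x : Fin n → Bool) : Formula n → ℕ
  | .var _ => 0
  | .const _ => 0
  | .and C D => C.notDown x + D.notDown x
  | .or C D => C.notDown x + D.notDown x
  | .not C => C.notDown x + (if C.eval x = true then 1 else 0)

/-- A formula computes a Boolean function `f` if it evaluates to `f x` on every input `x`. -/
def Formula.Computes {n : ℕ} (C : Formula n) (f : (Fin n → Bool) → Bool) : Prop :=
  ∀ x, C.eval x = f x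

/-- `I_f(f)`: the inversion complexity of `f` in formulas, the minimum number of
NOT nodes over all formulas computing `f`. -/
noncomputable def invFormula {n : ℕ} (f : (Fin n → Bool) → Bool) : ℕ :=
  sInf { k | ∃ C : Formula n, C.Computes f ∧ C.notCount = k }

/-- The set `S` of all vectors `x` such that every chain starting with `x`
has decrease `0` with respect to `f`. -/
def startSet {n : ℕ} (f : (Fin n → Bool) → Bool) : Set (Fin n → Bool) :=
  { x | ∀ X : List (Fin n → Bool), IsChain X → X.head? = some x → decOn f X = 0 }

/-- A gate of a circuit (straight-line program): an input variable, a constant,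
or an AND/OR/NOT of earlier gates (referenced by position). -/
inductive GateOp (n : ℕ) : Type
  | var : Fin n → GateOp n
  | const : Bool → GateOp n
  | and : ℕ → ℕ → GateOp n
  | or : ℕ → ℕ → GateOp n
  | not : ℕ → GateOp n

/-- A gate placed at position `i` may only reference strictly earlier positions. -/
def GateOp.refsLt {n : ℕ} : GateOp n → ℕ → Prop
  | .var _, _ => True
  | .const _, _ => True
  | .and j k, i => j < i ∧ k < i
  | .or j k, i => j < i ∧ k < i
  | .not j, i => j < i

/-- Evaluate a gate given the input `x` and the values of the earlier gates. -/
def GateOp.eval {n : ℕ} (x : Fin n → Bool) (vals : List Bool) : GateOp n → Bool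
  | .var i => x i
  | .const b => b
  | .and j k => vals.getD j false && vals.getD k false
  | .or j k => vals.getD j false || vals.getD k false
  | .not j => !(vals.getD j false)

/-- An acyclic Boolean circuit (gates have arbitrary fan-out), given as a
nonempty straight-line program; the output is the last gate. -/
structure Circuit (n : ℕ) : Type where
  gates : List (GateOp n)
  nonempty : gates ≠ []
  wf : ∀ (i : ℕ) (h : i < gates.length), (gates.get ⟨i, h⟩).refsLt i

/-- The list of values of all gates of the circuit on input `x`. -/
def Circuit.evalList {n : ℕ} (C : Circuit n) (x : Fin n → Bool) : List Bool :=
  C.gates.foldl (fun vals g => vals ++ [g.eval x vals]) []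

/-- The output of the circuit on input `x`: the value of the designated
(output) gate, i.e. the last gate. -/
def Circuit.eval {n : ℕ} (C : Circuit n) (x : Fin n → Bool) : Bool :=
  (C.evalList x).getLastD false

/-- The number of NOT gates of a circuit. -/
def Circuit.notGates {n : ℕ} (C : Circuit n) : ℕ :=
  (C.gates.filter fun g => match g with | .not _ => true | _ => false).length

/-- A circuit computes `f` if its output is `f x` on every input `x`. -/
def Circuit.Computes {n : ℕ} (C : Circuit n) (f : (Fin n → Bool) → Bool) : Prop :=
  ∀ x, C.eval x = f x

/-- `I(f)`: the inversion complexity of `f` in circuits, the minimum number of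
NOT gates over all circuits computing `f`. -/
noncomputable def invCircuit {n : ℕ} (f : (Fin n → Bool) → Bool) : ℕ :=
  sInf { k | ∃ C : Circuit n, C.Computes f ∧ C.notGates = k }

/-!
Lower bound. Let `C` have `k + 1` NOT gates and let `u` be the input of the first one. The gates
before it contain no NOT, so `u` is monotone, and along a chain `u` is `0` on an initial segment
and `1` on the rest. On the first part `C` agrees with the circuit in which that NOT gate is
replaced by the constant `1`, on the second with the one in which it is replaced by `0`; both have
`k` NOT gates. Splitting costs at most one decrease, so `d(C) + 1 ≤ 2 ^ (k + 1)` by induction.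

Upper bound. Let `A_i(x)` say that there are `y₀ ≤ ⋯ ≤ y_{i-1} ≤ x` on which `f` takes the values
`1, 0, 1, …`. Each `A_i` is monotone, `A_i ≥ A_{i+1}`, `A_i = 0` for `i > 2 d(f) + 1`, and
`f = ⋁_j (A_{2j+1} ∧ ¬A_{2j+2})`. With `k = ⌈log₂ (d(f) + 1)⌉`, the decreasing sequence
`A_2 ≥ A_4 ≥ ⋯` has at most `2 ^ k - 1` nonzero terms, and any such sequence `g` is inverted by
`k` NOT gates: negate its middle term `m = g_{t-1}` (`t = 2 ^ (k-1)`), fold it to the sequence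
`z_i = (g_i ∧ ¬m) ∨ g_{i+t}` of length `t - 1`, invert `z` recursively, and read off
`¬g_i = ¬z_i ∧ ¬m` for `i < t` and `¬g_{i+t} = ¬z_i ∨ ¬m`.
-/

abbrev BoolVec (n : ℕ) := Fin n → Bool
abbrev BoolFn (n : ℕ) := BoolVec n → Bool

section

variable {n : ℕ}

section Decrease

variable {f g : BoolFn n}

theorem decOn_congr : ∀ {X : List (BoolVec n)}, (∀ x ∈ X, f x = g x) → decOn f X = decOn g X
  | [], _ | [_], _ => rfl
  | a :: b :: t, h => by
    simp only [decOn, h a (by simp), h b (by simp),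
      decOn_congr fun x hx => h x (List.mem_cons_of_mem _ hx)]

theorem decOn_le_length : ∀ X : List (BoolVec n), decOn f X ≤ X.length
  | [] | [_] => by simp [decOn]
  | a :: b :: t => by
    have := decOn_le_length (b :: t)
    simp only [decOn, List.length_cons] at *
    split <;> omega

theorem decOn_append_le : ∀ X Y : List (BoolVec n),
    decOn f (X ++ Y) ≤ decOn f X + decOn f Y + 1
  | [], _ => by simp [decOn]
  | [_], [] => by simp [decOn]
  | [_], _ :: _ => by simp only [List.singleton_append, decOn]; split <;> omega
  | a :: b :: t, Y => by
    have := decOn_append_le (b :: t) Y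
    simp only [List.cons_append, decOn] at *
    omega

theorem decOn_append_pair (a b : BoolVec n) : ∀ X : List (BoolVec n),
    decOn f (X ++ [a, b]) = decOn f (X ++ [a]) + if f a = true ∧ f b = false then 1 else 0
  | [] => by simp [decOn]
  | [_] => by simp [decOn]
  | c :: d :: t => by
    have := decOn_append_pair a b (d :: t)
    simp only [List.cons_append, decOn] at *
    omega

theorem decOn_eq_zero_of_monotone (hf : Monotone f) :
    ∀ {X : List (BoolVec n)}, IsChain X → decOn f X = 0
  | [], _ | [_], _ => rfl
  | a :: b :: t, hX => by
    obtain ⟨hab, ht⟩ := List.isChain_cons_cons.mp hX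
    have hfab : ¬(f a = true ∧ f b = false) := fun ⟨ha, hb⟩ =>
      absurd (hf hab.le) (by simp [ha, hb])
    simp [decOn, hfab, decOn_eq_zero_of_monotone hf ht]

theorem IsChain.length_le_card {X : List (BoolVec n)} (hX : IsChain X) :
    X.length ≤ Fintype.card (BoolVec n) :=
  (List.isChain_iff_pairwise.mp hX).nodup.length_le_card

theorem bddAbove_decOn :
    BddAbove {m | ∃ X : List (BoolVec n), IsChain X ∧ decOn f X = m} :=
  ⟨_, by rintro _ ⟨X, hX, rfl⟩; exact (decOn_le_length X).trans hX.length_le_card⟩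

theorem decOn_le_dec {X : List (BoolVec n)} (hX : IsChain X) : decOn f X ≤ dec f :=
  le_csSup bddAbove_decOn ⟨X, hX, rfl⟩

theorem dec_le {K : ℕ} (h : ∀ X : List (BoolVec n), IsChain X → decOn f X ≤ K) : dec f ≤ K :=
  csSup_le ⟨0, [], List.isChain_nil, rfl⟩ (by rintro _ ⟨X, hX, rfl⟩; exact h X hX)

theorem dec_eq_zero_of_monotone (hf : Monotone f) : dec f = 0 :=
  Nat.le_zero.mp <| dec_le fun _ hX => (decOn_eq_zero_of_monotone hf hX).le

theorem IsChain.eq_true_of_mem_dropWhile {u : BoolFn n} (hu : Monotone u)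
    {X : List (BoolVec n)} (hX : IsChain X) {x : BoolVec n}
    (hx : x ∈ X.dropWhile fun y => !u y) : u x = true := by
  obtain ⟨s, S, hS⟩ := List.exists_cons_of_ne_nil (List.ne_nil_of_mem hx)
  have hs : u s = true := by simpa [hS] using List.head?_dropWhile_not (fun y => !u y) X
  have hsS : IsChain (s :: S) := hS ▸ hX.sublist (List.dropWhile_sublist _)
  rcases List.mem_cons.mp (hS ▸ hx) with rfl | hx
  · exact hs
  · have hsx := (List.pairwise_cons.mp (List.isChain_iff_pairwise.mp hsS)).1 x hx
    exact Bool.le_iff_imp.mp (hu hsx.le) hs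

theorem dec_le_dec_add_dec_add_one {f₀ f₁ u : BoolFn n} (hu : Monotone u)
    (h₀ : ∀ x, u x = false → f x = f₀ x) (h₁ : ∀ x, u x = true → f x = f₁ x) :
    dec f ≤ dec f₀ + dec f₁ + 1 := by
  refine dec_le fun X hX => ?_
  set P := X.takeWhile fun y => !u y
  set S := X.dropWhile fun y => !u y
  have hP : decOn f P = decOn f₀ P := decOn_congr fun x hx => h₀ x <| by
    simpa using List.mem_takeWhile_imp hx
  have hS : decOn f S = decOn f₁ S := decOn_congr fun x hx =>
    h₁ x (hX.eq_true_of_mem_dropWhile hu hx)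
  calc decOn f X = decOn f (P ++ S) := by rw [List.takeWhile_append_dropWhile]
    _ ≤ decOn f P + decOn f S + 1 := decOn_append_le P S
    _ ≤ dec f₀ + dec f₁ + 1 := by
      rw [hP, hS]
      gcongr
      exacts [decOn_le_dec (hX.sublist (List.takeWhile_sublist _)),
        decOn_le_dec (hX.sublist (List.dropWhile_sublist _))]

end Decrease

def evalGates (gs : List (GateOp n)) (x : BoolVec n) : List Bool :=
  gs.foldl (fun vals g => vals ++ [g.eval x vals]) []

def gateFn (gs : List (GateOp n)) (i : ℕ) : BoolFn n :=
  fun x => (evalGates gs x).getD i false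

def GateOp.isNot : GateOp n → Bool
  | .not _ => true
  | _ => false

theorem Circuit.notGates_eq (C : Circuit n) :
    C.notGates = (C.gates.filter GateOp.isNot).length := rfl

theorem evalGates_concat (gs : List (GateOp n)) (g : GateOp n) (x : BoolVec n) :
    evalGates (gs ++ [g]) x = evalGates gs x ++ [g.eval x (evalGates gs x)] := by
  simp [evalGates, List.foldl_append]

theorem length_evalGates (gs : List (GateOp n)) (x : BoolVec n) :
    (evalGates gs x).length = gs.length := by
  induction gs using List.reverseRecOn with
  | nil => rfl
  | append_singleton gs g ih => simp [evalGates_concat, ih]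

theorem Circuit.eval_eq_gateFn (C : Circuit n) :
    C.eval = gateFn C.gates (C.gates.length - 1) := by
  funext x
  rw [Circuit.eval, List.getLastD_eq_getLast?, List.getLast?_eq_getElem?, gateFn,
    List.getD_eq_getElem?_getD, Circuit.evalList, ← evalGates, length_evalGates]

theorem evalGates_prefix_append (gs hs : List (GateOp n)) (x : BoolVec n) :
    evalGates gs x <+: evalGates (gs ++ hs) x := by
  induction hs using List.reverseRecOn with
  | nil => simp
  | append_singleton hs g ih =>
    rw [← List.append_assoc, evalGates_concat]
    exact ih.trans (List.prefix_append _ _)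

theorem evalGates_middle {pre post : List (GateOp n)} {g₁ g₂ : GateOp n} {x : BoolVec n}
    (h : g₁.eval x (evalGates pre x) = g₂.eval x (evalGates pre x)) :
    evalGates (pre ++ g₁ :: post) x = evalGates (pre ++ g₂ :: post) x := by
  simp only [evalGates, List.foldl_append, List.foldl_cons] at h ⊢
  rw [h]

theorem gateFn_append_of_lt {gs : List (GateOp n)} (hs : List (GateOp n)) {i : ℕ}
    (hi : i < gs.length) : gateFn (gs ++ hs) i = gateFn gs i := by
  funext x
  obtain ⟨l, hl⟩ := evalGates_prefix_append gs hs x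
  rw [gateFn, ← hl, List.getD_append _ _ _ _ (by rwa [length_evalGates])]
  rfl

theorem gateFn_concat_length (gs : List (GateOp n)) (g : GateOp n) :
    gateFn (gs ++ [g]) gs.length = fun x => g.eval x (evalGates gs x) := by
  funext x
  simp [gateFn, evalGates_concat, length_evalGates]

theorem gateFn_of_length_le {gs : List (GateOp n)} {i : ℕ} (hi : gs.length ≤ i) :
    gateFn gs i = ⊥ :=
  funext fun x => List.getD_eq_default _ _ (by rwa [length_evalGates])

theorem GateOp.monotone_eval {g : GateOp n} (hg : g.isNot = false)
    {vals : BoolVec n → List Bool} (hvals : ∀ j, Monotone fun x => (vals x).getD j false) :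
    Monotone fun x => g.eval x (vals x) := by
  cases g with
  | var i => exact fun x y h => h i
  | const b => exact monotone_const
  | and j k => exact (hvals j).inf (hvals k)
  | or j k => exact (hvals j).sup (hvals k)
  | not j => simp [GateOp.isNot] at hg

theorem monotone_gateFn {gs : List (GateOp n)} (hgs : ∀ g ∈ gs, g.isNot = false) (i : ℕ) :
    Monotone (gateFn gs i) := by
  induction gs using List.reverseRecOn generalizing i with
  | nil => exact monotone_const
  | append_singleton gs g ih =>
    have ih := ih fun g' hg' => hgs g' (by simp [hg'])
    rcases lt_trichotomy i gs.length with hi | rfl | hi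
    · rw [gateFn_append_of_lt _ hi]
      exact ih i
    · rw [gateFn_concat_length]
      exact GateOp.monotone_eval (hgs g (by simp)) ih
    · rw [gateFn_of_length_le (by simp; omega)]
      exact monotone_const

theorem dec_gateFn_add_one_le (k : ℕ) (gs : List (GateOp n))
    (hgs : (gs.filter GateOp.isNot).length ≤ k) (i : ℕ) : dec (gateFn gs i) + 1 ≤ 2 ^ k := by
  cases hfind : gs.find? GateOp.isNot with
  | none =>
    have hmono := monotone_gateFn (by simpa using List.find?_eq_none.mp hfind) i
    simp [dec_eq_zero_of_monotone hmono, Nat.one_le_two_pow]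
  | some g =>
    obtain ⟨hg, pre, post, rfl, hpre⟩ := List.find?_eq_some_iff_append.mp hfind
    obtain ⟨a, rfl⟩ : ∃ a, g = .not a := by cases g <;> simp_all [GateOp.isNot]
    obtain ⟨k, rfl⟩ : ∃ k', k = k' + 1 := Nat.exists_eq_add_one.mpr (by
      simp [List.filter_append, List.filter_cons, GateOp.isNot] at hgs; omega)
    have hrest : ∀ b, ((pre ++ .const b :: post).filter GateOp.isNot).length ≤ k := by
      simp [List.filter_append, List.filter_cons, GateOp.isNot] at hgs ⊢; omega
    have hagree : ∀ b x, (!gateFn pre a x) = b →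
        gateFn (pre ++ .not a :: post) i x = gateFn (pre ++ .const b :: post) i x := by
      intro b x hx
      simp only [gateFn]
      rw [evalGates_middle]
      exact hx
    have hsplit := dec_le_dec_add_dec_add_one (monotone_gateFn (by simpa using hpre) a)
      (fun x hx => hagree true x (by simp [hx])) (fun x hx => hagree false x (by simp [hx]))
    have := dec_gateFn_add_one_le k _ (hrest true) i
    have := dec_gateFn_add_one_le k _ (hrest false) i
    rw [pow_succ]
    omega

theorem Circuit.dec_add_one_le_two_pow {C : Circuit n} {f : BoolFn n} (hC : C.Computes f) :
    dec f + 1 ≤ 2 ^ C.notGates := by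
  obtain rfl : f = C.eval := funext fun x => (hC x).symm
  rw [C.eval_eq_gateFn]
  exact dec_gateFn_add_one_le _ _ le_rfl _

section JointlyComputable

def Circuit.push (C : Circuit n) (g : GateOp n) (hg : g.refsLt C.gates.length) : Circuit n where
  gates := C.gates ++ [g]
  nonempty := by simp
  wf i hi := by
    rcases lt_or_ge i C.gates.length with h | h
    · rw [List.get_eq_getElem, List.getElem_append_left h]
      exact C.wf i h
    · obtain rfl : i = C.gates.length := by simp at hi; omega
      simpa using hg

theorem Circuit.notGates_push (C : Circuit n) (g : GateOp n) (hg : g.refsLt C.gates.length) :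
    (C.push g hg).notGates = C.notGates + if g.isNot then 1 else 0 := by
  rw [notGates_eq, notGates_eq]
  simp only [push, List.filter_append, List.length_append]
  cases g <;> rfl

def Circuit.Exposes (C : Circuit n) (g : BoolFn n) : Prop :=
  ∃ i < C.gates.length, gateFn C.gates i = g

theorem Circuit.Exposes.push {C : Circuit n} {g : BoolFn n} (h : C.Exposes g) (op : GateOp n)
    (hop : op.refsLt C.gates.length) : (C.push op hop).Exposes g := by
  obtain ⟨i, hi, rfl⟩ := h
  exact ⟨i, by simp [Circuit.push]; omega, gateFn_append_of_lt _ hi⟩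

theorem Circuit.exposes_push (C : Circuit n) (op : GateOp n) (hop : op.refsLt C.gates.length) :
    (C.push op hop).Exposes fun x => op.eval x (evalGates C.gates x) :=
  ⟨C.gates.length, by simp [Circuit.push], gateFn_concat_length _ _⟩

def JointlyComputable (k : ℕ) (G : Set (BoolFn n)) : Prop :=
  ∃ C : Circuit n, C.notGates ≤ k ∧ ∀ g ∈ G, C.Exposes g

variable {k : ℕ} {G H : Set (BoolFn n)} {a b z : BoolFn n}

theorem JointlyComputable.mono {l : ℕ} (hGH : G ⊆ H) (hkl : k ≤ l) (h : JointlyComputable k H) :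
    JointlyComputable l G :=
  let ⟨C, hCk, hCH⟩ := h
  ⟨C, hCk.trans hkl, fun g hg => hCH g (hGH hg)⟩

theorem jointlyComputable_empty : JointlyComputable (n := n) 0 ∅ :=
  ⟨⟨[.const false], by simp, by simp [GateOp.refsLt]⟩, le_of_eq rfl, by simp⟩

theorem JointlyComputable.insert_of_gate (h : JointlyComputable k G) (l : ℕ)
    (hz : ∀ C : Circuit n, (∀ g ∈ G, C.Exposes g) → ∃ op : GateOp n,
      op.refsLt C.gates.length ∧ (if op.isNot then 1 else 0) ≤ l ∧
        (fun x => op.eval x (evalGates C.gates x)) = z) :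
    JointlyComputable (k + l) (insert z G) := by
  obtain ⟨C, hCk, hCG⟩ := h
  obtain ⟨op, hop, hl, rfl⟩ := hz C hCG
  refine ⟨C.push op hop, by rw [C.notGates_push]; omega, ?_⟩
  rintro g (rfl | hg)
  · exact C.exposes_push op hop
  · exact (hCG g hg).push op hop

theorem JointlyComputable.insert_var (h : JointlyComputable k G) (i : Fin n) :
    JointlyComputable k (insert (fun x => x i) G) :=
  h.insert_of_gate 0 fun _ _ => ⟨.var i, trivial, le_rfl, rfl⟩

theorem JointlyComputable.insert_const (h : JointlyComputable k G) (c : Bool) :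
    JointlyComputable k (insert (fun _ => c) G) :=
  h.insert_of_gate 0 fun _ _ => ⟨.const c, trivial, le_rfl, rfl⟩

theorem JointlyComputable.insert_inf (h : JointlyComputable k G) (ha : a ∈ G) (hb : b ∈ G) :
    JointlyComputable k (insert (a ⊓ b) G) :=
  h.insert_of_gate 0 fun C hC => by
    obtain ⟨i, hi, rfl⟩ := hC a ha
    obtain ⟨j, hj, rfl⟩ := hC b hb
    exact ⟨.and i j, ⟨hi, hj⟩, le_rfl, rfl⟩

theorem JointlyComputable.insert_sup (h : JointlyComputable k G) (ha : a ∈ G) (hb : b ∈ G) :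
    JointlyComputable k (insert (a ⊔ b) G) :=
  h.insert_of_gate 0 fun C hC => by
    obtain ⟨i, hi, rfl⟩ := hC a ha
    obtain ⟨j, hj, rfl⟩ := hC b hb
    exact ⟨.or i j, ⟨hi, hj⟩, le_rfl, rfl⟩

theorem JointlyComputable.insert_compl (h : JointlyComputable k G) (ha : a ∈ G) :
    JointlyComputable (k + 1) (insert aᶜ G) :=
  h.insert_of_gate 1 fun C hC => by
    obtain ⟨i, hi, rfl⟩ := hC a ha
    exact ⟨.not i, hi, le_rfl, rfl⟩

theorem JointlyComputable.exists_computes (h : JointlyComputable k G) (ha : a ∈ G) :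
    ∃ C : Circuit n, C.Computes a ∧ C.notGates ≤ k := by
  obtain ⟨C, hCk, hCG⟩ := h
  obtain ⟨i, hi, rfl⟩ := hCG _ ha
  have hop : (GateOp.and (n := n) i i).refsLt C.gates.length := ⟨hi, hi⟩
  refine ⟨C.push _ hop, fun x => ?_, by rw [C.notGates_push]; simpa [GateOp.isNot] using hCk⟩
  rw [Circuit.eval_eq_gateFn]
  simp only [Circuit.push, List.length_append, List.length_singleton, Nat.add_sub_cancel,
    gateFn_concat_length, GateOp.eval, Bool.and_self]
  rfl

inductive MonoClosure (G : Set (BoolFn n)) : BoolFn n → Prop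
  | mem {g : BoolFn n} : g ∈ G → MonoClosure G g
  | var (i : Fin n) : MonoClosure G fun x => x i
  | const (c : Bool) : MonoClosure G fun _ => c
  | inf {a b : BoolFn n} : MonoClosure G a → MonoClosure G b → MonoClosure G (a ⊓ b)
  | sup {a b : BoolFn n} : MonoClosure G a → MonoClosure G b → MonoClosure G (a ⊔ b)

theorem MonoClosure.finset_sup {ι : Type*} (s : Finset ι) {F : ι → BoolFn n}
    (hF : ∀ i ∈ s, MonoClosure G (F i)) : MonoClosure G (s.sup F) :=
  Finset.sup_induction (const false) (fun _ ha _ hb => ha.sup hb) hF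

theorem MonoClosure.finset_inf {ι : Type*} (s : Finset ι) {F : ι → BoolFn n}
    (hF : ∀ i ∈ s, MonoClosure G (F i)) : MonoClosure G (s.inf F) :=
  Finset.inf_induction (const true) (fun _ ha _ hb => ha.inf hb) hF

theorem finset_inf_var_apply (y x : BoolVec n) :
    (Finset.univ.filter (y · = true)).inf (fun i (x : BoolVec n) => x i) x = decide (y ≤ x) := by
  rw [Finset.inf_apply, Bool.eq_iff_iff, decide_eq_true_iff]
  change _ = (⊤ : Bool) ↔ _
  rw [Finset.inf_eq_top_iff]
  simp [Pi.le_def, Bool.le_iff_imp]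

theorem MonoClosure.of_monotone (ha : Monotone a) : MonoClosure G a := by
  have : a = (Finset.univ.filter (a · = true)).sup fun y =>
      (Finset.univ.filter (y · = true)).inf fun i x => x i := by
    funext x
    rw [Finset.sup_apply]
    simp only [finset_inf_var_apply]
    refine le_antisymm ?_ (Finset.sup_le fun y hy => ?_)
    · cases hx : a x
      · exact Bool.false_le _
      · exact le_trans (by simp)
          (Finset.le_sup (f := fun y : BoolVec n => decide (y ≤ x)) (b := x) (by simp [hx]))
    · rw [Finset.mem_filter] at hy
      exact Bool.le_iff_imp.mpr fun hyx => Bool.le_iff_imp.mp (ha (of_decide_eq_true hyx)) hy.2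
  rw [this]
  exact finset_sup _ fun y _ => finset_inf _ fun i _ => var i

theorem JointlyComputable.insert_of_monoClosure (hz : MonoClosure G z) (hGH : G ⊆ H)
    (h : JointlyComputable k H) : JointlyComputable k (insert z H) := by
  induction hz generalizing H with
  | mem hg => rwa [Set.insert_eq_of_mem (hGH hg)]
  | var i => exact h.insert_var i
  | const c => exact h.insert_const c
  | inf _ _ iha ihb =>
    have hab := ihb (hGH.trans (Set.subset_insert _ _)) (iha hGH h)
    exact (hab.insert_inf (Set.mem_insert_of_mem _ (Set.mem_insert _ _)) (Set.mem_insert _ _)).mono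
      (Set.insert_subset_insert ((Set.subset_insert _ _).trans (Set.subset_insert _ _))) le_rfl
  | sup _ _ iha ihb =>
    have hab := ihb (hGH.trans (Set.subset_insert _ _)) (iha hGH h)
    exact (hab.insert_sup (Set.mem_insert_of_mem _ (Set.mem_insert _ _)) (Set.mem_insert _ _)).mono
      (Set.insert_subset_insert ((Set.subset_insert _ _).trans (Set.subset_insert _ _))) le_rfl

theorem JointlyComputable.monoClosure (h : JointlyComputable k G) :
    JointlyComputable k {z | MonoClosure G z} := by
  have : JointlyComputable k (G ∪ {z | MonoClosure G z}) :=
    Set.Finite.induction_on_subset (motive := fun t _ => JointlyComputable k (G ∪ t)) _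
      (Set.toFinite _) (by simpa using h) fun hz _ _ ht => by
        rw [Set.union_insert]
        exact ht.insert_of_monoClosure hz Set.subset_union_left
  exact this.mono Set.subset_union_right le_rfl

end JointlyComputable

section Inverter

theorem compl_eq_inf_of_le {α : Type*} [BooleanAlgebra α] {a b m : α} (hb : b ≤ a) (hm : m ≤ a) :
    aᶜ = ((a ⊓ mᶜ) ⊔ b)ᶜ ⊓ mᶜ := by
  rw [compl_sup, compl_inf, compl_compl]
  refine le_antisymm (le_inf (le_inf le_sup_left (compl_le_compl hb)) (compl_le_compl hm)) ?_
  calc (aᶜ ⊔ m) ⊓ bᶜ ⊓ mᶜ ≤ (aᶜ ⊔ m) ⊓ mᶜ := inf_le_inf_right _ inf_le_left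
    _ = aᶜ ⊓ mᶜ := by rw [inf_sup_right, inf_compl_self, sup_bot_eq]
    _ ≤ aᶜ := inf_le_left

theorem compl_eq_sup_of_le {α : Type*} [BooleanAlgebra α] {a m : α} (c : α) (ha : a ≤ m) :
    aᶜ = ((c ⊓ mᶜ) ⊔ a)ᶜ ⊔ mᶜ := by
  rw [compl_sup, compl_inf, compl_compl, sup_inf_right, sup_assoc, sup_compl_eq_top, sup_top_eq,
    top_inf_eq, sup_eq_left.mpr (compl_le_compl ha)]

variable {j : ℕ} {G : Set (BoolFn n)}

theorem JointlyComputable.union_range_compl (k : ℕ) {g : ℕ → BoolFn n}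
    (hG : JointlyComputable j G) (hg : Antitone g) (hbot : ∀ i, 2 ^ k - 1 ≤ i → g i = ⊥)
    (hgG : ∀ i, g i ∈ G) : JointlyComputable (j + k) (G ∪ Set.range fun i => (g i)ᶜ) := by
  induction k generalizing j G g with
  | zero =>
    refine hG.monoClosure.mono (Set.union_subset (fun _ => .mem) ?_) le_rfl
    rintro _ ⟨i, rfl⟩
    show MonoClosure G (g i)ᶜ
    rw [hbot i (by simp), compl_bot]
    exact .const true
  | succ k ih =>
    set t := 2 ^ k
    set m := g (t - 1)
    have ht : 2 ^ (k + 1) = 2 * t := by rw [pow_succ, mul_comm]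
    have ht1 : 1 ≤ t := Nat.one_le_two_pow
    set z : ℕ → BoolFn n := fun i => (g i ⊓ mᶜ) ⊔ g (i + t)
    have hz := ih (g := z) (hG.insert_compl (hgG _)).monoClosure
      (fun i i' h => sup_le_sup (inf_le_inf_right _ (hg h)) (hg (by omega)))
      (fun i hi => by
        show (g i ⊓ mᶜ) ⊔ g (i + t) = ⊥
        rw [hbot (i + t) (by omega), sup_bot_eq]
        exact (disjoint_compl_right.mono_left (hg (by omega))).eq_bot)
      (fun i => .sup (.inf (.mem (Set.mem_insert_of_mem _ (hgG i))) (.mem (Set.mem_insert _ _)))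
        (.mem (Set.mem_insert_of_mem _ (hgG _))))
    refine hz.monoClosure.mono ?_ (by omega)
    set H := {w | MonoClosure (insert mᶜ G) w} ∪ Set.range fun i => (z i)ᶜ
    have hm : MonoClosure H mᶜ := .mem (.inl (.mem (Set.mem_insert _ _)))
    rintro _ (hgi | ⟨i, rfl⟩)
    · exact .mem (.inl (.mem (Set.mem_insert_of_mem _ hgi)))
    rcases lt_or_ge i t with hi | hi
    · show MonoClosure H (g i)ᶜ
      rw [compl_eq_inf_of_le (b := g (i + t)) (m := m) (hg (by omega)) (hg (by omega))]
      exact .inf (.mem (.inr ⟨i, rfl⟩)) hm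
    · obtain ⟨i, rfl⟩ : ∃ i', i = i' + t := ⟨i - t, by omega⟩
      show MonoClosure H (g (i + t))ᶜ
      rw [compl_eq_sup_of_le (m := m) (g i) (hg (by omega))]
      exact .sup (.mem (.inr ⟨i, rfl⟩)) hm

end Inverter

section Alternation

variable {f : BoolFn n} {i : ℕ} {x y : BoolVec n}

/-- `AltBelow f i x`: there are `y₀ ≤ y₁ ≤ ⋯ ≤ y_{i-1} ≤ x` with `f y_j = true` iff `j` is even. -/
def AltBelow (f : BoolFn n) : ℕ → BoolVec n → Prop
  | 0, _ => True
  | i + 1, x => ∃ y ≤ x, f y = decide (i % 2 = 0) ∧ AltBelow f i y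

theorem AltBelow.mono (hxy : x ≤ y) : AltBelow f i x → AltBelow f i y := by
  cases i with
  | zero => exact id
  | succ i => exact fun ⟨z, hzx, hz⟩ => ⟨z, hzx.trans hxy, hz⟩

theorem AltBelow.of_succ : AltBelow f (i + 1) x → AltBelow f i x :=
  fun ⟨_, hyx, _, h⟩ => h.mono hyx

theorem AltBelow.succ (hfx : f x = decide (i % 2 = 0)) (h : AltBelow f i x) :
    AltBelow f (i + 1) x :=
  ⟨x, le_rfl, hfx, h⟩

theorem AltBelow.exists_chain (h : AltBelow f (i + 1) x) :
    ∃ X y, IsChain (X ++ [y]) ∧ y ≤ x ∧ f y = decide (i % 2 = 0) ∧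
      (i + 1) / 2 ≤ decOn f (X ++ [y]) := by
  induction i generalizing x with
  | zero =>
    obtain ⟨y, hyx, hfy, -⟩ := h
    exact ⟨[], y, List.isChain_singleton y, hyx, hfy, by simp⟩
  | succ i ih =>
    obtain ⟨y', hy'x, hfy', h⟩ := h
    obtain ⟨X, y, hX, hyy', hfy, hdec⟩ := ih h
    have hlt : y < y' := lt_of_le_of_ne hyy' fun e => by
      subst e
      have := hfy.symm.trans hfy'
      rcases Nat.mod_two_eq_zero_or_one i with hi | hi <;> simp [hi, Nat.add_mod] at this
    refine ⟨X ++ [y], y', List.isChain_append.mpr ⟨hX, List.isChain_singleton _, by simpa using hlt⟩,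
      hy'x, hfy', ?_⟩
    rw [List.append_assoc, List.singleton_append, decOn_append_pair, hfy, hfy']
    rcases Nat.mod_two_eq_zero_or_one i with hi | hi <;> simp [hi, Nat.add_mod] <;> omega

theorem AltBelow.le (h : AltBelow f i x) : i ≤ 2 * dec f + 1 := by
  cases i with
  | zero => omega
  | succ i =>
    obtain ⟨X, y, hX, -, -, hdec⟩ := h.exists_chain
    have := decOn_le_dec (f := f) hX
    omega

noncomputable def altFn (f : BoolFn n) (i : ℕ) : BoolFn n := fun x => decide (AltBelow f i x)

theorem monotone_altFn : Monotone (altFn f i) := fun _ _ h =>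
  Bool.le_iff_imp.mpr fun hx => decide_eq_true (AltBelow.mono h (of_decide_eq_true hx))

theorem antitone_altFn : Antitone (altFn f) := antitone_nat_of_succ_le fun _ _ =>
  Bool.le_iff_imp.mpr fun hx => decide_eq_true (of_decide_eq_true hx).of_succ

theorem altFn_eq_bot (hi : 2 * dec f + 1 < i) : altFn f i = ⊥ :=
  funext fun _ => decide_eq_false fun h => absurd h.le (by omega)

theorem exists_altBelow_odd_not_even (hfx : f x = true) :
    ∃ i ≤ dec f, AltBelow f (2 * i + 1) x ∧ ¬AltBelow f (2 * i + 2) x := by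
  have hex : ∃ i, ¬AltBelow f (2 * i + 2) x := ⟨dec f, fun h => absurd h.le (by omega)⟩
  refine ⟨Nat.find hex, Nat.find_min' hex fun h => absurd h.le (by omega), ?_, Nat.find_spec hex⟩
  rcases hi : Nat.find hex with _ | j
  · exact AltBelow.succ (by simp [hfx]) trivial
  · exact (not_not.mp (Nat.find_min hex (show j < Nat.find hex by omega))).succ (by simp [hfx])

theorem eq_finset_sup_altFn (f : BoolFn n) :
    f = (Finset.range (dec f + 1)).sup fun i => altFn f (2 * i + 1) ⊓ (altFn f (2 * i + 2))ᶜ := by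
  funext x
  rw [Finset.sup_apply]
  cases hfx : f x
  · refine ((Finset.sup_eq_bot_iff _ _).mpr fun i _ => ?_).symm
    have : AltBelow f (2 * i + 1) x → AltBelow f (2 * i + 2) x := fun h => h.succ (by simp [hfx])
    simpa [altFn] using this
  · obtain ⟨i, hi, hodd, heven⟩ := exists_altBelow_odd_not_even hfx
    refine (top_unique (le_trans ?_ (Finset.le_sup (f := fun i =>
      (altFn f (2 * i + 1) ⊓ (altFn f (2 * i + 2))ᶜ) x) (Finset.mem_range_succ_iff.mpr hi)))).symm
    simp [altFn, hodd, heven]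

end Alternation

theorem exists_circuit_notGates_le_clog (f : BoolFn n) :
    ∃ C : Circuit n, C.Computes f ∧ C.notGates ≤ Nat.clog 2 (dec f + 1) := by
  set k := Nat.clog 2 (dec f + 1)
  have hk : dec f + 1 ≤ 2 ^ k := Nat.le_pow_clog one_lt_two _
  set G := {z | MonoClosure (∅ : Set (BoolFn n)) z}
  have hinv := jointlyComputable_empty.monoClosure.union_range_compl k
    (g := fun i => altFn f (2 * i + 2)) (antitone_altFn.comp_monotone fun _ _ h => by omega)
    (fun i hi => altFn_eq_bot (by omega)) (fun i => .of_monotone monotone_altFn)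
  rw [zero_add] at hinv
  refine hinv.monoClosure.exists_computes ?_
  have := MonoClosure.finset_sup (G := G ∪ Set.range fun i => (altFn f (2 * i + 2))ᶜ)
    (F := fun i => altFn f (2 * i + 1) ⊓ (altFn f (2 * i + 2))ᶜ) (Finset.range (dec f + 1))
    fun i _ => .inf (.mem (.inl (.of_monotone monotone_altFn))) (.mem (.inr ⟨i, rfl⟩))
  rwa [← eq_finset_sup_altFn f] at this

end

/-- Markov's theorem: the inversion complexity of every Boolean function `f`
in circuits equals `⌈log₂ (d(f) + 1)⌉`. -/
theorem markov (n : ℕ) (f : (Fin n → Bool) → Bool) :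
    invCircuit f = Nat.clog 2 (dec f + 1) := by
  obtain ⟨C, hC, hCk⟩ := exists_circuit_notGates_le_clog f
  have hCS : C.notGates ∈ {k | ∃ C : Circuit n, C.Computes f ∧ C.notGates = k} := ⟨C, hC, rfl⟩
  obtain ⟨C', hC', hC'k⟩ := Nat.sInf_mem ⟨_, hCS⟩
  rw [invCircuit]
  refine le_antisymm ((Nat.sInf_le hCS).trans hCk) ?_
  rw [← hC'k, Nat.clog_le_iff_le_pow one_lt_two]
  exact Circuit.dec_add_one_le_two_pow hC'

end InversionComplexity
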